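/- arXiv:1908.01753 — 3 statements merged into one kernel-verified Lean document; each statement's English description precedes it below -/
import Mathlib

section
/- For the map T(x,y) = ((9/10)x, (11/10)y - (1/10)y³): if y₀ ∈ (0, √(11/3)), then the second coordinate of Tⁿ(x₀,y₀) converges to 1 as n → ∞, and the first coordinate converges to 0. -/
open Filter Topology
set_option maxHeartbeats 1000000

theorem gd_converges_to_minimum (x₀ y₀ : ℝ) (hy : y₀ ∈ Set.Ioo (0 : ℝ) (Real.sqrt (11 / 3))) :
    Tendsto (fun n =>
        ((fun p : ℝ × ℝ => (9 / 10 * p.1, 11 / 10 * p.2 - 1 / 10 * p.2 ^ 3))^[n] (x₀, y₀)).2)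
      atTop (𝓝 1) ∧
    Tendsto (fun n =>
        ((fun p : ℝ × ℝ => (9 / 10 * p.1, 11 / 10 * p.2 - 1 / 10 * p.2 ^ 3))^[n] (x₀, y₀)).1)
      atTop (𝓝 0) := by
  obtain ⟨hy0, hys⟩ := hy
  set f : ℝ → ℝ := fun y => 11 / 10 * y - 1 / 10 * y ^ 3 with hf
  set s := Real.sqrt (11 / 3) with hsdef
  have hs2 : s ^ 2 = 11 / 3 := Real.sq_sqrt (by norm_num)
  have hs0 : 0 ≤ s := Real.sqrt_nonneg _
  have h1s : (1 : ℝ) < s := by nlinarith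
  set m := min y₀ 1 with hmdef
  set M := max y₀ 1 with hMdef
  have hm0 : 0 < m := lt_min hy0 one_pos
  have hm1 : m ≤ 1 := min_le_right _ _
  have h1M : (1 : ℝ) ≤ M := le_max_right _ _
  have hMs : M < s := max_lt hys h1s
  have hM2 : M ^ 2 < 11 / 3 := by nlinarith
  set c : ℝ := 1 - m / 10 with hcdef
  have hc0 : 0 ≤ c := by simp only [hcdef]; linarith
  have hc1 : c < 1 := by simp only [hcdef]; linarith
  -- step lemma
  have hstep : ∀ y ∈ Set.Icc m M, f y ∈ Set.Icc m M ∧ |f y - 1| ≤ c * |y - 1| := by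
    intro y ⟨hym, hyM⟩
    have hy2 : y ^ 2 < 11 / 3 := by nlinarith
    have hylt2 : y < 2 := by nlinarith
    constructor
    · constructor
      · simp only [hf]; nlinarith [mul_nonneg (sub_nonneg.2 hym) (show (0:ℝ) ≤ 11 - y^2 - y*m - m^2 by nlinarith)]
      · simp only [hf]; nlinarith [mul_nonneg (sub_nonneg.2 hyM) (show (0:ℝ) ≤ 11 - y^2 - y*M - M^2 by nlinarith)]
    · rcases le_or_gt y 1 with hle | hlt
      · have hfle : f y ≤ 1 := by simp only [hf]; nlinarith
        rw [abs_of_nonpos (by linarith), abs_of_nonpos (by linarith)]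
        simp only [hf, hcdef]
        nlinarith [mul_nonneg (sub_nonneg.2 hle) (show (0:ℝ) ≤ y + y^2 - m by nlinarith)]
      · have hfge : 1 ≤ f y := by simp only [hf]; nlinarith
        rw [abs_of_nonneg (by linarith), abs_of_nonneg (by linarith)]
        simp only [hf, hcdef]
        nlinarith [mul_nonneg (sub_nonneg.2 hlt.le) (show (0:ℝ) ≤ y + y^2 - m by nlinarith)]
  -- iterate formula
  have key : ∀ n : ℕ, (fun p : ℝ × ℝ => (9 / 10 * p.1, 11 / 10 * p.2 - 1 / 10 * p.2 ^ 3))^[n] (x₀, y₀)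
      = ((9 / 10 : ℝ) ^ n * x₀, f^[n] y₀) := by
    intro n
    induction n with
    | zero => simp
    | succ n ih =>
      rw [Function.iterate_succ_apply', Function.iterate_succ_apply', ih]
      refine Prod.ext ?_ ?_
      · simp [pow_succ]; ring
      · rfl
  have hinv : ∀ n : ℕ, f^[n] y₀ ∈ Set.Icc m M := by
    intro n
    induction n with
    | zero => exact ⟨min_le_left _ _, le_max_left _ _⟩
    | succ n ih => rw [Function.iterate_succ_apply']; exact (hstep _ ih).1
  have hbound : ∀ n : ℕ, |f^[n] y₀ - 1| ≤ c ^ n * |y₀ - 1| := by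
    intro n
    induction n with
    | zero => simp
    | succ n ih =>
      rw [Function.iterate_succ_apply', pow_succ]
      calc |f (f^[n] y₀) - 1| ≤ c * |f^[n] y₀ - 1| := (hstep _ (hinv n)).2
        _ ≤ c * (c ^ n * |y₀ - 1|) := by
            exact mul_le_mul_of_nonneg_left ih hc0
        _ = c ^ n * c * |y₀ - 1| := by ring
  have hcn : Tendsto (fun n : ℕ => c ^ n * |y₀ - 1|) atTop (𝓝 0) := by
    simpa using (tendsto_pow_atTop_nhds_zero_of_lt_one hc0 hc1).mul_const |y₀ - 1|
  have hy2lim : Tendsto (fun n : ℕ => f^[n] y₀ - 1) atTop (𝓝 0) := by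
    apply squeeze_zero_norm (fun n => ?_) hcn
    simpa [Real.norm_eq_abs] using hbound _
  constructor
  · have : Tendsto (fun n : ℕ => f^[n] y₀) atTop (𝓝 1) := by
      simpa using hy2lim.add_const 1
    exact this.congr fun n => by rw [key n]
  · have : Tendsto (fun n : ℕ => (9 / 10 : ℝ) ^ n * x₀) atTop (𝓝 0) := by
      simpa using (tendsto_pow_atTop_nhds_zero_of_lt_one (by norm_num) (by norm_num : (9/10:ℝ) < 1)).mul_const x₀
    exact this.congr fun n => by rw [key n]
end

section
/- The set of initial points (x₀,y₀) ∈ ℝ × (-√(11/3), √(11/3)) for which the iterates of T(x,y) = ((9/10)x, (11/10)y - (1/10)y³) converge to (0,0) is exactly the line {(x,0) : x ∈ ℝ} intersected with Ω, and hence has two-dimensional Lebesgue measure zero. -/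
/-!
The map is a product: a contraction `x ↦ 9x/10` in the first coordinate and the cubic
`g y = y (11 - y²) / 10` in the second, so the orbit converges to the saddle exactly when the
`g`-orbit of `y` tends to `0`. The bound `√(11/3)` is the critical point of `g`, hence `g` maps
`(-√(11/3), √(11/3))` into itself, and there `|g y| ≥ min |y| (11/15)`: `|g y| ≥ |y|` when
`|y| ≤ 1` and `|g y| > 11/15` otherwise. So a nonzero orbit never enters the ball of radius
`min |y| (11/15)`, and the basin is the line `y = 0`, a null set.
-/

open Filter Topology MeasureTheory Set

lemma min_norm_le_norm_iterate {E : Type*} [Norm E] {f : E → E} {S : Set E} (hS : MapsTo f S S)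
    {c : ℝ} (hf : ∀ y ∈ S, min ‖y‖ c ≤ ‖f y‖) {y : E} (hy : y ∈ S) (n : ℕ) :
    min ‖y‖ c ≤ ‖f^[n] y‖ := by
  induction n with
  | zero => exact min_le_left _ _
  | succ n ih =>
    rw [Function.iterate_succ_apply']
    calc min ‖y‖ c ≤ min ‖f^[n] y‖ c := le_min ih (min_le_right _ _)
      _ ≤ ‖f (f^[n] y)‖ := hf _ (hS.iterate n hy)

lemma not_tendsto_iterate_nhds_zero {E : Type*} [SeminormedAddGroup E] {f : E → E} {S : Set E}
    (hS : MapsTo f S S) {c : ℝ} (hc : 0 < c) (hf : ∀ y ∈ S, min ‖y‖ c ≤ ‖f y‖) {y : E}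
    (hy : y ∈ S) (hy0 : 0 < ‖y‖) : ¬Tendsto (fun n ↦ f^[n] y) atTop (𝓝 0) := by
  intro h
  obtain ⟨n, hn⟩ := (h.eventually (Metric.ball_mem_nhds 0 (lt_min hy0 hc))).exists
  rw [dist_zero_right] at hn
  exact (min_norm_le_norm_iterate hS hf hy n).not_gt hn

noncomputable def cubicStep (y : ℝ) : ℝ := 11 / 10 * y - 1 / 10 * y ^ 3

lemma mapsTo_cubicStep : MapsTo cubicStep {y | y ^ 2 < 11 / 3} {y | y ^ 2 < 11 / 3} := by
  intro y (hy : y ^ 2 < 11 / 3)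
  have hsq : cubicStep y ^ 2 = y ^ 2 * (11 - y ^ 2) ^ 2 / 100 := by unfold cubicStep; ring
  show cubicStep y ^ 2 < 11 / 3
  -- `t (11 - t)²` increases on `[0, 11/3]`: at `11/3` it is larger by `(11/3 - t)² (44/3 - t)`.
  nlinarith [mul_nonneg (sq_nonneg (11 / 3 - y ^ 2)) (by linarith : (0 : ℝ) ≤ 44 / 3 - y ^ 2)]

lemma min_abs_le_abs_cubicStep {y : ℝ} (hy : y ^ 2 < 11 / 3) :
    min |y| (11 / 15) ≤ |cubicStep y| := by
  have habs : |cubicStep y| = |y| * ((11 - y ^ 2) / 10) := by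
    rw [show cubicStep y = y * ((11 - y ^ 2) / 10) by unfold cubicStep; ring, abs_mul,
      abs_of_pos (by linarith : (0 : ℝ) < (11 - y ^ 2) / 10)]
  rw [habs]
  rcases le_or_gt |y| 1 with h | h
  · have : y ^ 2 ≤ 1 := by nlinarith [sq_abs y, abs_nonneg y]
    exact (min_le_left _ _).trans (by nlinarith [abs_nonneg y])
  · exact (min_le_right _ _).trans (by nlinarith)

lemma tendsto_iterate_cubicStep_iff {y : ℝ} (hy : y ^ 2 < 11 / 3) :
    Tendsto (fun n ↦ cubicStep^[n] y) atTop (𝓝 0) ↔ y = 0 := by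
  refine ⟨fun h ↦ by_contra fun hy0 ↦ ?_, ?_⟩
  · exact not_tendsto_iterate_nhds_zero mapsTo_cubicStep (by norm_num : (0 : ℝ) < 11 / 15)
      (fun _ ↦ min_abs_le_abs_cubicStep) hy (norm_pos_iff.mpr hy0) h
  · rintro rfl
    simp [Function.iterate_fixed (show cubicStep 0 = 0 by norm_num [cubicStep])]

lemma tendsto_iterate_gradientStep_iff {x y : ℝ} (hy : y ^ 2 < 11 / 3) :
    Tendsto (fun n ↦ (Prod.map (9 / 10 * ·) cubicStep)^[n] (x, y)) atTop (𝓝 (0, 0)) ↔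
      y = 0 := by
  simp only [Prod.map_iterate, mul_left_iterate, Prod.tendsto_iff, Prod.map_fst, Prod.map_snd]
  rw [tendsto_iterate_cubicStep_iff hy, and_iff_right_iff_imp]
  intro _
  simpa using (tendsto_pow_atTop_nhds_zero_of_lt_one (by norm_num : (0 : ℝ) ≤ 9 / 10)
    (by norm_num)).mul_const x

lemma volume_setOf_snd_eq_zero : volume {p : ℝ × ℝ | p.2 = 0} = 0 := by
  rw [show {p : ℝ × ℝ | p.2 = 0} = univ ×ˢ {0} by ext; simp, Measure.volume_eq_prod,
    Measure.prod_prod, Real.volume_singleton, mul_zero]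

theorem gd_saddle_basin_is_line_and_null
    (T : ℝ × ℝ → ℝ × ℝ)
    (hT : T = fun p => (9 / 10 * p.1, 11 / 10 * p.2 - 1 / 10 * p.2 ^ 3))
    (Ω : Set (ℝ × ℝ))
    (hΩ : Ω = Set.univ ×ˢ Set.Ioo (-Real.sqrt (11 / 3)) (Real.sqrt (11 / 3))) :
    {p : ℝ × ℝ | p ∈ Ω ∧ Tendsto (fun n => T^[n] p) atTop (𝓝 ((0 : ℝ), (0 : ℝ)))} =
      {p : ℝ × ℝ | p.2 = 0} ∩ Ω ∧
    volume {p : ℝ × ℝ | p ∈ Ω ∧ Tendsto (fun n => T^[n] p) atTop (𝓝 ((0 : ℝ), (0 : ℝ)))} = 0 := by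
  have hT' : T = Prod.map (9 / 10 * ·) cubicStep := by rw [hT]; rfl
  have hbasin : {p : ℝ × ℝ | p ∈ Ω ∧ Tendsto (fun n => T^[n] p) atTop (𝓝 ((0 : ℝ), (0 : ℝ)))} =
      {p : ℝ × ℝ | p.2 = 0} ∩ Ω := by
    ext ⟨x, y⟩
    simp only [hΩ, hT', mem_ofPred_eq, mem_inter_iff, mem_prod, mem_univ, true_and, mem_Ioo,
      ← Real.sq_lt]
    exact ⟨fun ⟨hy, h⟩ ↦ ⟨(tendsto_iterate_gradientStep_iff hy).mp h, hy⟩,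
      fun ⟨h, hy⟩ ↦ ⟨hy, (tendsto_iterate_gradientStep_iff hy).mpr h⟩⟩
  exact ⟨hbasin, hbasin ▸ measure_mono_null inter_subset_left volume_setOf_snd_eq_zero⟩
end

section
/- Let q : ℝ → ℝ be C² with q(y) = -1 for all y ≥ 30, and f(x,y) = y²/4 - q(y)x². Then the gradient descent map with step size 1/2, G(x,y) = (x + q(y)x, y - y/4 + (1/2)q'(y)x²), satisfies G(x,y) = (0, (3/4)y) for all y ≥ 30; consequently every initial point with y₀ ≥ 30 has iterates with first coordinate 0 for all n ≥ 1 and second coordinate (3/4)ⁿ y₀ → 0, so the iterates converge to the critical point (0,0). -/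
open Filter Topology

theorem gd_example_converges_to_saddle
    (q : ℝ → ℝ) (hq : ContDiff ℝ 2 q) (hq30 : ∀ y : ℝ, 30 ≤ y → q y = -1)
    (G : ℝ × ℝ → ℝ × ℝ)
    (hG : G = fun p => (p.1 + q p.2 * p.1, p.2 - p.2 / 4 + 1 / 2 * deriv q p.2 * p.1 ^ 2)) :
    (∀ x y : ℝ, 30 ≤ y → G (x, y) = (0, 3 / 4 * y)) ∧
    ∀ x₀ y₀ : ℝ, 30 ≤ y₀ →
      (∀ n : ℕ, 1 ≤ n → (G^[n] (x₀, y₀)).1 = 0) ∧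
      (∀ n : ℕ, (G^[n] (x₀, y₀)).2 = (3 / 4) ^ n * y₀) ∧
      Tendsto (fun n => G^[n] (x₀, y₀)) atTop (𝓝 ((0 : ℝ), (0 : ℝ))) := by
  have hdiff : Differentiable ℝ q := hq.differentiable (by norm_num)
  have hderiv0 : ∀ y : ℝ, 30 ≤ y → deriv q y = 0 := by
    intro y hy
    have h1 : HasDerivWithinAt q 0 (Set.Ici y) y := by
      have hc : HasDerivWithinAt (fun _ : ℝ => (-1 : ℝ)) 0 (Set.Ici y) y :=
        (hasDerivAt_const y (-1 : ℝ)).hasDerivWithinAt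
      exact hc.congr (fun z hz => hq30 z (le_trans hy hz)) (hq30 y hy)
    have h2 : HasDerivWithinAt q (deriv q y) (Set.Ici y) y :=
      (hdiff y).hasDerivAt.hasDerivWithinAt
    have hu : UniqueDiffWithinAt ℝ (Set.Ici y) y := uniqueDiffOn_Ici y y Set.self_mem_Ici
    rw [← h2.derivWithin hu, h1.derivWithin hu]
  have hstep : ∀ x y : ℝ, 30 ≤ y → G (x, y) = (0, 3 / 4 * y) := by
    intro x y hy
    rw [hG]
    simp only
    rw [hq30 y hy, hderiv0 y hy]
    rw [Prod.mk.injEq]; constructor <;> ring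
  have hzero : ∀ y : ℝ, G (0, y) = (0, 3 / 4 * y) := by
    intro y
    rw [hG]
    simp only
    rw [Prod.mk.injEq]; constructor <;> ring
  have hiter : ∀ (n : ℕ) (y : ℝ), G^[n] (0, y) = (0, (3 / 4) ^ n * y) := by
    intro n
    induction n with
    | zero => intro y; simp
    | succ k ih =>
      intro y
      rw [Function.iterate_succ_apply, hzero, ih]
      norm_num
      ring
  refine ⟨hstep, fun x₀ y₀ hy₀ => ?_⟩
  have key : ∀ n : ℕ, 1 ≤ n → G^[n] (x₀, y₀) = (0, (3 / 4) ^ n * y₀) := by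
    intro n hn
    obtain ⟨m, rfl⟩ := Nat.exists_eq_add_of_le hn
    rw [add_comm, Function.iterate_add_apply, Function.iterate_one, hstep x₀ y₀ hy₀,
      hiter]
    rw [pow_succ]
    norm_num
    ring
  refine ⟨fun n hn => by rw [key n hn], ?_, ?_⟩
  · intro n
    match n with
    | 0 => simp
    | k + 1 => rw [key (k + 1) (Nat.succ_le_succ (Nat.zero_le k))]
  · have hlim : Tendsto (fun n : ℕ => ((0 : ℝ), (3 / 4 : ℝ) ^ n * y₀)) atTop
        (𝓝 ((0 : ℝ), (0 : ℝ))) := by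
      refine Tendsto.prodMk_nhds tendsto_const_nhds ?_
      have := (tendsto_pow_atTop_nhds_zero_of_lt_one (by norm_num : (0:ℝ) ≤ 3/4)
        (by norm_num : (3/4:ℝ) < 1)).mul_const y₀
      simpa using this
    refine hlim.congr' ?_
    filter_upwards [eventually_ge_atTop 1] with n hn
    exact (key n hn).symm
end
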